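/- Let r ≥ 1 and k ≥ 0 be integers, and let S ⊆ ℂ^r be a subset whose ℂ-linear span is all of ℂ^r. If P ∈ ℂ[w_1, …, w_{r+1}] is homogeneous of degree k and satisfies σ_b(P) = P for every b ∈ S, then P = c·w_{r+1}^k for some c ∈ ℂ. In particular, the ℂ-vector space of homogeneous degree-k polynomials invariant under σ_b for all b ∈ S is one-dimensional, spanned by w_{r+1}^k. -/
import Mathlib

open MvPolynomial

noncomputable def shear (r : ℕ) (b : Fin r → ℂ) :
    MvPolynomial (Fin (r + 1)) ℂ →ₐ[ℂ] MvPolynomial (Fin (r + 1)) ℂ :=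
  aeval fun i : Fin (r + 1) =>
    if h : (i : ℕ) < r then
      X i + C (b ⟨(i : ℕ), h⟩) * X (Fin.last r)
    else X i

private lemma aeval_eq_eval_c {σ : Type*} (x : σ → ℂ) (q : MvPolynomial σ ℂ) :
    aeval x q = eval x q := by
  rw [aeval_def, Algebra.algebraMap_self]
  rfl

private lemma eval_comp_aeval {σ : Type*} (x : σ → ℂ) (g : σ → MvPolynomial σ ℂ)
    (p : MvPolynomial σ ℂ) :
    eval x (aeval g p) = eval (fun i => eval x (g i)) p := by
  rw [← aeval_eq_eval_c, comp_aeval_apply (f := g) (aeval x) p]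
  simp only [aeval_eq_eval_c]

private lemma polyEval_comp_aeval {σ : Type*} (s : ℂ) (g : σ → Polynomial ℂ)
    (p : MvPolynomial σ ℂ) :
    Polynomial.eval s (aeval g p) = eval (fun i => Polynomial.eval s (g i)) p := by
  rw [← Polynomial.coe_aeval_eq_eval, comp_aeval_apply (f := g) (Polynomial.aeval s) p]
  simp only [Polynomial.coe_aeval_eq_eval, aeval_eq_eval_c]

private lemma eval_smul_of_isHomogeneous {n m : ℕ} {Q : MvPolynomial (Fin m) ℂ}
    (h : Q.IsHomogeneous n) (s : ℂ) (x : Fin m → ℂ) :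
    eval (s • x) Q = s ^ n * eval x Q := by
  rw [eval_eq', eval_eq', Finset.mul_sum]
  refine Finset.sum_congr rfl fun d hd => ?_
  have hdeg : ∑ i, d i = n := by
    have h1 := h (mem_support_iff.mp hd)
    rw [Finsupp.weight_apply] at h1
    simp only [Pi.one_apply, smul_eq_mul, mul_one, Finsupp.sum] at h1
    rw [← h1]
    exact (Finset.sum_subset (Finset.subset_univ _)
      fun i _ hi => Finsupp.notMem_support_iff.mp hi).symm
  have h2 : ∏ i, (s • x) i ^ d i = s ^ n * ∏ i, x i ^ d i := by
    simp only [Pi.smul_apply, smul_eq_mul, mul_pow]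
    rw [Finset.prod_mul_distrib, Finset.prod_pow_eq_pow_sum, hdeg]
  rw [h2]; ring

private noncomputable def emb (r : ℕ) (y : Fin r → ℂ) : Fin (r + 1) → ℂ :=
  fun i => if h : (i : ℕ) < r then y ⟨(i : ℕ), h⟩ else 1

private lemma emb_lt {r : ℕ} (y : Fin r → ℂ) {i : Fin (r + 1)} (h : (i : ℕ) < r) :
    emb r y i = y ⟨(i : ℕ), h⟩ := dif_pos h

private lemma emb_last {r : ℕ} (y : Fin r → ℂ) : emb r y (Fin.last r) = 1 := by
  rw [emb, dif_neg (by simp)]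

private noncomputable def Gf (r : ℕ) (P : MvPolynomial (Fin (r + 1)) ℂ) (y : Fin r → ℂ) : ℂ :=
  eval (emb r y) P

private lemma key (r k : ℕ) (S : Set (Fin r → ℂ)) (hS : Submodule.span ℂ S = ⊤)
    (P : MvPolynomial (Fin (r + 1)) ℂ) (hhom : P.IsHomogeneous k)
    (hinv : ∀ b ∈ S, shear r b P = P) :
    ∃ c : ℂ, P = C c * X (Fin.last r) ^ k := by
  classical
  have claim1 : ∀ b ∈ S, ∀ y, Gf r P (y + b) = Gf r P y := by
    intro b hb y
    conv_rhs => rw [Gf, ← hinv b hb]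
    rw [Gf, shear, eval_comp_aeval]
    have hfun : (fun i : Fin (r + 1) => eval (emb r y)
        (if h : (i : ℕ) < r then X i + C (b ⟨(i : ℕ), h⟩) * X (Fin.last r) else X i))
        = emb r (y + b) := by
      funext i
      by_cases h : (i : ℕ) < r
      · rw [dif_pos h]
        simp only [map_add, map_mul, eval_X, eval_C, emb_last, mul_one, emb_lt _ h]
        rfl
      · rw [dif_neg h, eval_X]
        have h1 : i = Fin.last r := Fin.ext (by have := i.isLt; simp; omega)
        rw [h1, emb_last, emb_last]
    rw [hfun]
  have natmul : ∀ c : Fin r → ℂ, (∀ y, Gf r P (y + c) = Gf r P y) →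
      ∀ (n : ℕ) (y), Gf r P (y + (n : ℂ) • c) = Gf r P y := by
    intro c hc n
    induction n with
    | zero => intro y; simp
    | succ n ih =>
      intro y
      have h3 : y + ((n + 1 : ℕ) : ℂ) • c = (y + c) + (n : ℂ) • c := by
        push_cast; module
      rw [h3, ih, hc]
  have smulinv : ∀ c : Fin r → ℂ, (∀ y, Gf r P (y + c) = Gf r P y) →
      ∀ (t : ℂ) (y), Gf r P (y + t • c) = Gf r P y := by
    intro c hc t y
    set q : Polynomial ℂ := aeval (fun i : Fin (r + 1) =>
      if h : (i : ℕ) < r then Polynomial.C (y ⟨i, h⟩) + Polynomial.C (c ⟨i, h⟩) * Polynomial.X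
      else 1) P with hq
    have hqeval : ∀ s : ℂ, q.eval s = Gf r P (y + s • c) := by
      intro s
      rw [hq, polyEval_comp_aeval, Gf]
      have hfun : (fun i : Fin (r + 1) => Polynomial.eval s
          (if h : (i : ℕ) < r then Polynomial.C (y ⟨i, h⟩) + Polynomial.C (c ⟨i, h⟩) * Polynomial.X
           else 1)) = emb r (y + s • c) := by
        funext i
        by_cases h : (i : ℕ) < r
        · rw [dif_pos h, emb_lt _ h]
          simp only [Polynomial.eval_add, Polynomial.eval_mul, Polynomial.eval_C,
            Polynomial.eval_X, Pi.add_apply, Pi.smul_apply, smul_eq_mul]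
          ring
        · rw [dif_neg h]
          have h1 : i = Fin.last r := Fin.ext (by have := i.isLt; simp; omega)
          rw [h1, emb_last, Polynomial.eval_one]
      rw [hfun]
    have hq0 : q = Polynomial.C (Gf r P y) := by
      rw [← sub_eq_zero]
      apply Polynomial.eq_zero_of_infinite_isRoot
      apply Set.Infinite.mono (s := Set.range (Nat.cast : ℕ → ℂ))
      · rintro _ ⟨n, rfl⟩
        simp only [Set.mem_setOf_eq, Polynomial.IsRoot, Polynomial.eval_sub, Polynomial.eval_C,
          hqeval, natmul c hc n y, sub_self]
      · exact Set.infinite_range_of_injective Nat.cast_injective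
    rw [← hqeval t, hq0, Polynomial.eval_C]
  let T : Submodule ℂ (Fin r → ℂ) :=
    { carrier := {c | ∀ y, Gf r P (y + c) = Gf r P y}
      add_mem' := by
        intro a b ha hb y
        rw [← add_assoc, hb, ha]
      zero_mem' := by intro y; simp
      smul_mem' := fun t c hc => smulinv c hc t }
  have hT : ∀ c, c ∈ T := by
    have hle : Submodule.span ℂ S ≤ T := Submodule.span_le.mpr (fun b hb => claim1 b hb)
    rw [hS] at hle
    exact fun c => hle trivial
  have hconst : ∀ y, Gf r P y = Gf r P 0 := by
    intro y
    have h4 := hT y 0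
    simpa using h4
  refine ⟨Gf r P 0, ?_⟩
  have hQhom : (P - C (Gf r P 0) * X (Fin.last r) ^ k).IsHomogeneous k :=
    hhom.sub (isHomogeneous_C_mul_X_pow _ _ _)
  have hzero : ∀ x : Fin (r + 1) → ℂ,
      eval x (P - C (Gf r P 0) * X (Fin.last r) ^ k) = 0 := by
    intro x
    set q : Polynomial ℂ := aeval (fun i : Fin (r + 1) =>
      if i = Fin.last r then Polynomial.X else Polynomial.C (x i))
      (P - C (Gf r P 0) * X (Fin.last r) ^ k) with hq
    have hqeval : ∀ s : ℂ, q.eval s =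
        eval (Function.update x (Fin.last r) s) (P - C (Gf r P 0) * X (Fin.last r) ^ k) := by
      intro s
      rw [hq, polyEval_comp_aeval]
      have hfun : (fun i : Fin (r + 1) => Polynomial.eval s
          (if i = Fin.last r then Polynomial.X else Polynomial.C (x i)))
          = Function.update x (Fin.last r) s := by
        funext i
        by_cases h : i = Fin.last r
        · subst h; simp
        · simp [h, Function.update_of_ne h]
      rw [hfun]
    have hvanish : ∀ s : ℂ, s ≠ 0 → q.eval s = 0 := by
      intro s hs
      rw [hqeval]
      have hupd : Function.update x (Fin.last r) s
          = s • emb r (fun i : Fin r => x i.castSucc / s) := by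
        funext j
        by_cases h : j = Fin.last r
        · subst h
          rw [Function.update_self, Pi.smul_apply, emb_last, smul_eq_mul, mul_one]
        · have hj : (j : ℕ) < r := by
            have h5 := j.isLt
            have h6 : (j : ℕ) ≠ r := fun hh => h (Fin.ext (by simp [hh]))
            omega
          have hcs : (⟨(j : ℕ), hj⟩ : Fin r).castSucc = j := by
            apply Fin.ext; simp
          rw [Function.update_of_ne h, Pi.smul_apply, emb_lt _ hj, smul_eq_mul, hcs]
          field_simp
      rw [hupd, eval_smul_of_isHomogeneous hQhom]
      have h7 : eval (emb r fun i => x i.castSucc / s)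
          (P - C (Gf r P 0) * X (Fin.last r) ^ k) = 0 := by
        rw [map_sub, eval_mul, eval_C, eval_pow, eval_X, emb_last, one_pow, mul_one]
        rw [show eval (emb r fun i => x i.castSucc / s) P
            = Gf r P (fun i => x i.castSucc / s) from rfl]
        rw [hconst]; ring
      rw [h7, mul_zero]
    have hq0 : q = 0 := by
      apply Polynomial.eq_zero_of_infinite_isRoot
      apply Set.Infinite.mono (s := {s : ℂ | s ≠ 0})
      · intro s hs
        exact hvanish s hs
      · have h8 : ({s : ℂ | s ≠ 0}) = ({0} : Set ℂ)ᶜ := by ext z; simp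
        rw [h8]
        exact (Set.finite_singleton 0).infinite_compl
    have h8 := hqeval (x (Fin.last r))
    rw [Function.update_eq_self] at h8
    rw [← h8, hq0, Polynomial.eval_zero]
  have h9 := hQhom.eq_zero_of_forall_eval_eq_zero hzero
  exact sub_eq_zero.mp h9

/-- If `P ∈ ℂ[w_1, …, w_{r+1}]` is homogeneous of degree `k` and invariant under the shear
`σ_b` for every `b` in a spanning subset `S ⊆ ℂ^r`, then `P = c · w_{r+1}^k` for some `c ∈ ℂ`.
In particular the space of such invariant homogeneous polynomials of degree `k` is
one-dimensional, spanned by `w_{r+1}^k`. -/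
theorem invariant_homogeneous_eq_smul_pow_last
    (r k : ℕ) (hr : 1 ≤ r)
    (S : Set (Fin r → ℂ))
    (hS : Submodule.span ℂ S = ⊤)
    (P : MvPolynomial (Fin (r + 1)) ℂ)
    (hhom : P.IsHomogeneous k)
    (hinv : ∀ b ∈ S, shear r b P = P) :
    (∃ c : ℂ, P = C c * X (Fin.last r) ^ k) ∧
    {Q : MvPolynomial (Fin (r + 1)) ℂ | Q.IsHomogeneous k ∧ ∀ b ∈ S, shear r b Q = Q}
      = Set.range fun c : ℂ =>
          c • (X (Fin.last r) ^ k : MvPolynomial (Fin (r + 1)) ℂ) := by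
  have hXlast : ∀ b : Fin r → ℂ,
      shear r b (X (Fin.last r) : MvPolynomial (Fin (r + 1)) ℂ) = X (Fin.last r) := by
    intro b
    rw [shear, aeval_X, dif_neg (by simp)]
  constructor
  · exact key r k S hS P hhom hinv
  · ext Q
    simp only [Set.mem_setOf_eq, Set.mem_range]
    constructor
    · rintro ⟨hQh, hQi⟩
      obtain ⟨c, hc⟩ := key r k S hS Q hQh hQi
      exact ⟨c, by rw [hc, smul_eq_C_mul]⟩
    · rintro ⟨c, rfl⟩
      refine ⟨by rw [smul_eq_C_mul]; exact isHomogeneous_C_mul_X_pow _ _ _, ?_⟩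
      intro b hb
      rw [map_smul, map_pow, hXlast]
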